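/- The calculi NMVL_R^sd and NMVL_R are deductively equivalent: Σ ⊢_{NMVL_R^sd} S iff Σ ⊢_{NMVL_R} S, for every set of sequents Σ and sequent S. -/

import Mathlib

/-- Formulas over a set `C` of connectives (applied to lists of arguments). -/
inductive Fm (C : Type) : Type
  | atom : ℕ → Fm C
  | app : C → List (Fm C) → Fm C

noncomputable instance {C : Type} : DecidableEq (Fm C) := Classical.decEq _

/-- A sequent of finite sets of labelled formulas. -/
structure Sequent (C : Type) [DecidableEq C] (n : ℕ) where
  ant : Finset (Fm C × Fin n)
  suc : Finset (Fm C × Fin n)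

variable {C : Type} [DecidableEq C] {n : ℕ}

/-- A valuation legal w.r.t. the non-deterministic tables `tbl`. -/
def IsVal (tbl : C → List (Fin n) → Finset (Fin n)) (v : Fm C → Fin n) : Prop :=
  ∀ c args, v (Fm.app c args) ∈ tbl c (args.map v)

/-- A valuation satisfies a sequent. -/
def Sat (v : Fm C → Fin n) (S : Sequent C n) : Prop :=
  (∀ p ∈ S.ant, v p.1 = p.2) → ∃ p ∈ S.suc, v p.1 = p.2

/-- Semantic entailment. -/
def Entails (tbl : C → List (Fin n) → Finset (Fin n)) (H : Set (Sequent C n)) (S : Sequent C n) : Prop :=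
  ∀ v : Fm C → Fin n, IsVal tbl v → (∀ T ∈ H, Sat v T) → Sat v S

/-- The family (∗(φ₁,…,φ_ℓ)×k)⁻¹ of antecedent sets. -/
def Theta (tbl : C → List (Fin n) → Finset (Fin n)) (c : C) (args : List (Fm C)) (k : Fin n) :
    Set (Finset (Fm C × Fin n)) :=
  { Θ | ∃ ks : List (Fin n), ks.length = args.length ∧ k ∈ tbl c ks ∧ Θ = (args.zip ks).toFinset }

/-- Λ ∈ ⋁(∗(φ₁,…,φ_ℓ)×k)⁻¹ : a choice set hitting each Θ_q and contained in their union. -/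
def Choice (tbl : C → List (Fin n) → Finset (Fin n)) (c : C) (args : List (Fm C)) (k : Fin n)
    (Λ : Finset (Fm C × Fin n)) : Prop :=
  (∀ Θ ∈ Theta tbl c args k, ∃ x ∈ Θ, x ∈ Λ) ∧
  (∀ x ∈ Λ, ∃ Θ ∈ Theta tbl c args k, x ∈ Θ)

/-- Which optional axioms/rules a calculus has. -/
structure Rules where
  tableAx : Bool      -- table axioms (2)
  tableRuleS : Bool   -- succedent table rules (10)
  dualAx : Bool       -- distributively dual axioms (13)
  anteRule : Bool     -- antecedent introduction rules (17)
  multiShift : Bool   -- K-L-multi-shift (16)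
  cut : Bool
  res : Bool

/-- Derivability from hypothesis sequents `H`; axioms (ψ,k)→(ψ,k), L-shift, R-shift and
weakenings are always present, the other axioms/rules are governed by `R`. -/
inductive Deriv (R : Rules) (tbl : C → List (Fin n) → Finset (Fin n)) (H : Set (Sequent C n)) :
    Sequent C n → Prop
  | hyp {S} : S ∈ H → Deriv R tbl H S
  | ax (ψ : Fm C) (k : Fin n) : Deriv R tbl H ⟨{(ψ, k)}, {(ψ, k)}⟩
  | tableAx (c : C) (args : List (Fm C)) (ks : List (Fin n))
      (hlen : ks.length = args.length) (h : R.tableAx = true) :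
      Deriv R tbl H ⟨(args.zip ks).toFinset, (tbl c ks).image (fun k => (Fm.app c args, k))⟩
  | lshift {Γ Δ} (φ : Fm C) (k : Fin n) :
      Deriv R tbl H ⟨insert (φ, k) Γ, Δ⟩ →
      Deriv R tbl H ⟨Γ, Δ ∪ ({k}ᶜ : Finset (Fin n)).image (fun k' => (φ, k'))⟩
  | rshift {Γ Δ} (φ : Fm C) {k' k'' : Fin n} (h : k' ≠ k'') :
      Deriv R tbl H ⟨Γ, insert (φ, k') Δ⟩ → Deriv R tbl H ⟨insert (φ, k'') Γ, Δ⟩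
  | lweak {Γ Δ} (φ : Fm C) (k : Fin n) :
      Deriv R tbl H ⟨Γ, Δ⟩ → Deriv R tbl H ⟨insert (φ, k) Γ, Δ⟩
  | rweak {Γ Δ} (φ : Fm C) (k : Fin n) :
      Deriv R tbl H ⟨Γ, Δ⟩ → Deriv R tbl H ⟨Γ, insert (φ, k) Δ⟩
  | cut {Γ Δ} (φ : Fm C) (k : Fin n) (h : R.cut = true) :
      Deriv R tbl H ⟨Γ, insert (φ, k) Δ⟩ → Deriv R tbl H ⟨insert (φ, k) Γ, Δ⟩ →
      Deriv R tbl H ⟨Γ, Δ⟩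
  | res {Γ Δ' Δ''} (φ : Fm C) {k' k'' : Fin n} (h : R.res = true) (hk : k' ≠ k'') :
      Deriv R tbl H ⟨Γ, insert (φ, k') Δ'⟩ → Deriv R tbl H ⟨Γ, insert (φ, k'') Δ''⟩ →
      Deriv R tbl H ⟨Γ, Δ' ∪ Δ''⟩
  | tableRuleS {Γ Δ} (c : C) (args : List (Fm C)) (ks : List (Fin n))
      (hlen : ks.length = args.length) (h : R.tableRuleS = true)
      (prem : ∀ p ∈ args.zip ks, Deriv R tbl H ⟨Γ, insert p Δ⟩) :
      Deriv R tbl H ⟨Γ, Δ ∪ (tbl c ks).image (fun k => (Fm.app c args, k))⟩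
  | dualAx (c : C) (args : List (Fm C)) (k : Fin n) (Λ : Finset (Fm C × Fin n))
      (h : R.dualAx = true) (hΛ : Choice tbl c args k Λ) :
      Deriv R tbl H ⟨{(Fm.app c args, k)}, Λ⟩
  | anteRule {Γ Δ} (c : C) (args : List (Fm C)) (k : Fin n) (h : R.anteRule = true)
      (prem : ∀ ks : List (Fin n), ks.length = args.length → k ∈ tbl c ks →
        Deriv R tbl H ⟨Γ ∪ (args.zip ks).toFinset, Δ⟩) :
      Deriv R tbl H ⟨insert (Fm.app c args, k) Γ, Δ⟩
  | multiShift {Γ Δ} (φ : Fm C) (K : Finset (Fin n)) (h : R.multiShift = true)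
      (hK : K ≠ Finset.univ)
      (prem : ∀ k ∈ K, Deriv R tbl H ⟨insert (φ, k) Γ, Δ⟩) :
      Deriv R tbl H ⟨Γ, Δ ∪ Kᶜ.image (fun k' => (φ, k'))⟩

/-- NMVL_A : table axioms, cut and resolution. -/
def NMVL_A : Rules := ⟨true, false, false, false, false, true, true⟩
/-- NMVL_A with cut but without resolution. -/
def NMVL_A_cut : Rules := ⟨true, false, false, false, false, true, false⟩
/-- NMVL_A with resolution but without cut. -/
def NMVL_A_res : Rules := ⟨true, false, false, false, false, false, true⟩
/-- NMVL_R : succedent table rules, cut and resolution. -/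
def NMVL_R : Rules := ⟨false, true, false, false, false, true, true⟩
/-- NMVL_R without cut and resolution. -/
def NMVL_R_cf : Rules := ⟨false, true, false, false, false, false, false⟩
/-- NMVL_A^dd : distributively dual axioms, cut and resolution. -/
def NMVL_Add : Rules := ⟨false, false, true, false, false, true, true⟩
/-- NMVL_R^sd : antecedent table rules, multi-shift, cut and resolution. -/
def NMVL_Rsd : Rules := ⟨false, false, false, true, true, true, true⟩

/-! Both calculi share the structural rules, cut and resolution, so it suffices to derive the
table rules of each in the other. Cutting premises `Γ, (φ, k) → Δ` (`k ∈ K`) one at a time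
against `→ {φ} × univ` (an axiom after L-shift) gives `Γ → Δ, {φ} × Kᶜ`: multi-shift, even for
`K = univ`. For `K = univ` this is a case split over all labellings of the arguments
`φ₁, …, φ_ℓ`; in a labelling outside the table row of `k`, the succedent table rule applied to
axioms, followed by R-shifts, closes the case, which gives the antecedent rule in `NMVL_R`.
Conversely, a labelling `ks'` with `k ∈ ∗(ks')` but `k ∉ ∗(ks)` differs from `ks` at some `φⱼ`,
where R-shift turns the premise `Γ → Δ, (φⱼ, ksⱼ)` of the succedent rule into
`Γ, (φⱼ, ks'ⱼ) → Δ`; the antecedent rule and multi-shift over `∗(ks)ᶜ` then give its conclusion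
in `NMVL_R^sd`. -/

theorem List.exists_mem_zip_ne {α β : Type*} {as : List α} {bs bs' : List β}
    (hb : bs.length = as.length) (hb' : bs'.length = as.length) (hne : bs ≠ bs') :
    ∃ a b b', (a, b) ∈ as.zip bs ∧ (a, b') ∈ as.zip bs' ∧ b ≠ b' := by
  obtain ⟨j, hj, hj', hj_ne⟩ :
      ∃ j, ∃ (hj : j < bs.length) (hj' : j < bs'.length), bs[j] ≠ bs'[j] := by
    by_contra! h
    exact hne (List.ext_getElem (hb.trans hb'.symm) h)
  have ha : j < as.length := hb ▸ hj
  refine ⟨as[j], bs[j], bs'[j], ?_, ?_, hj_ne⟩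
  · exact List.mem_iff_getElem.2 ⟨j, by simp [ha, hj], List.getElem_zip⟩
  · exact List.mem_iff_getElem.2 ⟨j, by simp [ha, hj'], List.getElem_zip⟩

namespace Deriv

variable {R : Rules} {tbl : C → List (Fin n) → Finset (Fin n)} {H : Set (Sequent C n)}
  {Γ Δ : Finset (Fm C × Fin n)}

theorem lweak_union (E : Finset (Fm C × Fin n)) (h : Deriv R tbl H ⟨Γ, Δ⟩) :
    Deriv R tbl H ⟨E ∪ Γ, Δ⟩ := by
  induction E using Finset.induction_on with
  | empty => simpa using h
  | insert p E _ ih => rw [Finset.insert_union]; exact ih.lweak p.1 p.2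

theorem rweak_union (E : Finset (Fm C × Fin n)) (h : Deriv R tbl H ⟨Γ, Δ⟩) :
    Deriv R tbl H ⟨Γ, E ∪ Δ⟩ := by
  induction E using Finset.induction_on with
  | empty => simpa using h
  | insert p E _ ih => rw [Finset.insert_union]; exact ih.rweak p.1 p.2

theorem mono {Γ' Δ' : Finset (Fm C × Fin n)} (h : Deriv R tbl H ⟨Γ, Δ⟩) (hΓ : Γ ⊆ Γ')
    (hΔ : Δ ⊆ Δ') : Deriv R tbl H ⟨Γ', Δ'⟩ := by
  simpa [Finset.union_eq_left.2 hΓ, Finset.union_eq_left.2 hΔ] using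
    (h.rweak_union Δ').lweak_union Γ'

theorem suc_univ [NeZero n] (φ : Fm C) :
    Deriv R tbl H ⟨∅, Finset.univ.image (fun k => (φ, k))⟩ := by
  have h := lshift (Γ := ∅) φ 0 (ax (R := R) (tbl := tbl) (H := H) φ 0)
  rwa [← Finset.image_singleton (fun k => (φ, k)), ← Finset.image_union,
    Finset.union_compl] at h

theorem multiShift_of_cut [NeZero n] (hcut : R.cut = true) (φ : Fm C) (K : Finset (Fin n))
    (prem : ∀ k ∈ K, Deriv R tbl H ⟨insert (φ, k) Γ, Δ⟩) :
    Deriv R tbl H ⟨Γ, Δ ∪ Kᶜ.image (fun k => (φ, k))⟩ := by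
  induction K using Finset.induction_on with
  | empty => exact (suc_univ φ).mono (Finset.empty_subset _) (by simp)
  | insert a K ha ih =>
    have hrest :
        Deriv R tbl H ⟨Γ, insert (φ, a) (Δ ∪ (insert a K)ᶜ.image (fun k => (φ, k)))⟩ := by
      have h := ih fun k hk => prem k (Finset.mem_insert_of_mem hk)
      rwa [← Finset.insert_erase (Finset.mem_compl.2 ha), ← Finset.compl_insert,
        Finset.image_insert, Finset.union_insert] at h
    exact cut φ a hcut hrest
      ((prem a (Finset.mem_insert_self a K)).mono subset_rfl Finset.subset_union_left)

theorem of_forall_label [NeZero n] (hcut : R.cut = true) (φ : Fm C)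
    (prem : ∀ k, Deriv R tbl H ⟨insert (φ, k) Γ, Δ⟩) : Deriv R tbl H ⟨Γ, Δ⟩ := by
  simpa using multiShift_of_cut hcut φ Finset.univ fun k _ => prem k

theorem of_forall_labelling [NeZero n] (hcut : R.cut = true) (args : List (Fm C))
    (prem : ∀ ks : List (Fin n), ks.length = args.length →
      Deriv R tbl H ⟨Γ ∪ (args.zip ks).toFinset, Δ⟩) :
    Deriv R tbl H ⟨Γ, Δ⟩ := by
  induction args generalizing Γ with
  | nil => simpa using prem [] rfl
  | cons φ args ih =>
    refine of_forall_label hcut φ fun k => ih fun ks hks => ?_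
    simpa [Finset.union_insert, Finset.insert_union] using prem (k :: ks) (by simp [hks])

theorem elim_suc_image {φ : Fm C} {k : Fin n} {T : Finset (Fin n)} (hk : k ∉ T)
    (h : Deriv R tbl H ⟨insert (φ, k) Γ, Δ ∪ T.image (fun k' => (φ, k'))⟩) :
    Deriv R tbl H ⟨insert (φ, k) Γ, Δ⟩ := by
  induction T using Finset.induction_on generalizing Δ with
  | empty => simpa using h
  | insert a T _ ih =>
    rw [Finset.image_insert, Finset.union_insert, ← Finset.insert_union] at h
    have h' := rshift φ (fun hak : a = k => hk (hak ▸ Finset.mem_insert_self a T))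
      (ih (fun hkT => hk (Finset.mem_insert_of_mem hkT)) h)
    rwa [Finset.insert_idem] at h'

theorem anteRule_of_tableRuleS [NeZero n] (hcut : R.cut = true) (hts : R.tableRuleS = true)
    (c : C) (args : List (Fm C)) (k : Fin n)
    (prem : ∀ ks : List (Fin n), ks.length = args.length → k ∈ tbl c ks →
      Deriv R tbl H ⟨Γ ∪ (args.zip ks).toFinset, Δ⟩) :
    Deriv R tbl H ⟨insert (Fm.app c args, k) Γ, Δ⟩ := by
  refine of_forall_labelling hcut args fun ks hks => ?_
  by_cases hk : k ∈ tbl c ks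
  · exact (prem ks hks hk).mono
      (Finset.union_subset_union (Finset.subset_insert _ _) subset_rfl) subset_rfl
  · rw [Finset.insert_union]
    refine elim_suc_image hk (tableRuleS c args ks hks hts fun p hp => ?_)
    exact (ax p.1 p.2).mono (by simp [hp]) (by simp)

theorem tableRuleS_of_anteRule [NeZero n] (hcut : R.cut = true) (hante : R.anteRule = true)
    (c : C) (args : List (Fm C)) (ks : List (Fin n)) (hks : ks.length = args.length)
    (prem : ∀ p ∈ args.zip ks, Deriv R tbl H ⟨Γ, insert p Δ⟩) :
    Deriv R tbl H ⟨Γ, Δ ∪ (tbl c ks).image (fun k => (Fm.app c args, k))⟩ := by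
  rw [← compl_compl (tbl c ks)]
  refine multiShift_of_cut hcut _ _ fun k hk => anteRule c args k hante fun ks' hks' hk' => ?_
  have hne : ks ≠ ks' := by rintro rfl; exact Finset.mem_compl.1 hk hk'
  obtain ⟨φ, l, l', hl, hl', hll'⟩ := List.exists_mem_zip_ne hks hks' hne
  exact (rshift φ hll' (prem _ hl)).mono
    (Finset.insert_subset (Finset.mem_union_right _ (List.mem_toFinset.2 hl'))
      Finset.subset_union_left) subset_rfl

theorem NMVL_R_of_NMVL_Rsd [NeZero n] {S : Sequent C n} (h : Deriv NMVL_Rsd tbl H S) :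
    Deriv NMVL_R tbl H S := by
  induction h with
  | hyp h => exact hyp h
  | ax ψ k => exact ax ψ k
  | tableAx _ _ _ _ h => nomatch h
  | lshift φ k _ ih => exact ih.lshift φ k
  | rshift φ hne _ ih => exact ih.rshift φ hne
  | lweak φ k _ ih => exact ih.lweak φ k
  | rweak φ k _ ih => exact ih.rweak φ k
  | cut φ k _ _ _ ih₁ ih₂ => exact cut φ k rfl ih₁ ih₂
  | res φ _ hk _ _ ih₁ ih₂ => exact res φ rfl hk ih₁ ih₂
  | tableRuleS _ _ _ _ h => nomatch h
  | dualAx _ _ _ _ h => nomatch h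
  | anteRule c args k _ _ ih => exact anteRule_of_tableRuleS rfl rfl c args k ih
  | multiShift φ K _ _ _ ih => exact multiShift_of_cut rfl φ K ih

theorem NMVL_Rsd_of_NMVL_R [NeZero n] {S : Sequent C n} (h : Deriv NMVL_R tbl H S) :
    Deriv NMVL_Rsd tbl H S := by
  induction h with
  | hyp h => exact hyp h
  | ax ψ k => exact ax ψ k
  | tableAx _ _ _ _ h => nomatch h
  | lshift φ k _ ih => exact ih.lshift φ k
  | rshift φ hne _ ih => exact ih.rshift φ hne
  | lweak φ k _ ih => exact ih.lweak φ k
  | rweak φ k _ ih => exact ih.rweak φ k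
  | cut φ k _ _ _ ih₁ ih₂ => exact cut φ k rfl ih₁ ih₂
  | res φ _ hk _ _ ih₁ ih₂ => exact res φ rfl hk ih₁ ih₂
  | tableRuleS c args ks hks _ _ ih => exact tableRuleS_of_anteRule rfl rfl c args ks hks ih
  | dualAx _ _ _ _ h => nomatch h
  | anteRule _ _ _ h => nomatch h
  | multiShift _ _ h => nomatch h

end Deriv

theorem stmt15_general (hn : 2 ≤ n) (tbl : C → List (Fin n) → Finset (Fin n))
    (H : Set (Sequent C n)) (S : Sequent C n) :
    Deriv NMVL_Rsd tbl H S ↔ Deriv NMVL_R tbl H S := by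
  have : NeZero n := ⟨by omega⟩
  exact ⟨Deriv.NMVL_R_of_NMVL_Rsd, Deriv.NMVL_Rsd_of_NMVL_R⟩

/-- NMVL_R^sd and NMVL_R are deductively equivalent. -/
theorem stmt15 (hn : 2 ≤ n) (tbl : C → List (Fin n) → Finset (Fin n))
    (htbl : ∀ c ks, (tbl c ks).Nonempty) (H : Set (Sequent C n)) (S : Sequent C n) :
    Deriv NMVL_Rsd tbl H S ↔ Deriv NMVL_R tbl H S :=
  stmt15_general hn tbl H S
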